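/- arXiv:2505.12411 — 4 statements merged into one kernel-verified Lean document; each statement's English description precedes it below -/
import Mathlib

section
/- Let A be an n×n real symmetric matrix with nonnegative entries and zero diagonal whose edge set E (the set of ordered pairs (u,v) with u ≠ v and A u v > 0) is nonempty, let L = D − A be its Laplacian, let y : Fin n → Fin c be vertex labels with one-hot label matrix Y ∈ ℝ^{n×c}, and suppose the embedding matrix Z ∈ ℝ^{n×d} is linearly separable with classifier W ∈ ℝ^{d×c}, i.e. Y = Z·W, with W ≠ 0. Then tr(Zᵀ L Z) ≥ (α_m · |E| / (2‖W‖²)) · (1 − H), where α_m = min_{(u,v)∈E} A u v, ‖W‖ is the ℓ²-operator norm of W, and H is the edge homophily of the graph. -/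
open Matrix

open scoped Classical in
/-- **Theorem 1 (smoothness lower bound).** Let `A` be an `n × n` real symmetric
matrix with nonnegative entries and zero diagonal whose edge set
`E = {(u,v) | u ≠ v ∧ A u v > 0}` is nonempty, and let `L = D - A` be its
Laplacian. Let `y` be vertex labels with one-hot label matrix `Y`, and suppose
the embeddings `Z` are linearly separable with classifier `W ≠ 0`, i.e.
`Y = Z * W`.  Then
`tr(Zᵀ L Z) ≥ (α_m |E| / (2 ‖W‖²)) (1 - H)`,
where `α_m = min_{(u,v) ∈ E} A u v`, `‖W‖` is the ℓ²-operator norm of the map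
on row vectors `x ↦ x ᵥ* W` (i.e. of `Wᵀ *ᵥ ·`), and `H` is the edge
homophily of the graph. -/
theorem smoothness_lower_bound_of_linearly_separable
    {n c d : ℕ} (A : Matrix (Fin n) (Fin n) ℝ) (hsym : A.IsSymm)
    (hnonneg : ∀ u v, 0 ≤ A u v) (hdiag : ∀ u, A u u = 0)
    (E : Finset (Fin n × Fin n))
    (hE : E = Finset.univ.filter fun p => p.1 ≠ p.2 ∧ 0 < A p.1 p.2)
    (hEne : E.Nonempty)
    (L : Matrix (Fin n) (Fin n) ℝ)
    (hL : L = Matrix.diagonal (fun u => ∑ v, A u v) - A)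
    (y : Fin n → Fin c)
    (Y : Matrix (Fin n) (Fin c) ℝ)
    (hY : ∀ u j, Y u j = if j = y u then (1 : ℝ) else 0)
    (Z : Matrix (Fin n) (Fin d) ℝ) (W : Matrix (Fin d) (Fin c) ℝ)
    (hsep : Y = Z * W) (hW : W ≠ 0)
    (αm : ℝ) (hαm : αm = E.inf' hEne fun p => A p.1 p.2)
    (H : ℝ) (hH : H = ((E.filter fun p => y p.1 = y p.2).card : ℝ) / E.card) :
    αm * E.card / (2 * ‖(Matrix.toEuclideanLin Wᵀ).toContinuousLinearMap‖ ^ 2)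
        * (1 - H) ≤ (Zᵀ * L * Z).trace := by
  set T := (Matrix.toEuclideanLin Wᵀ).toContinuousLinearMap with hT
  set N := ‖T‖ with hNdef
  -- N > 0
  have hN : 0 < N := by
    rw [hNdef, norm_pos_iff]
    intro h
    apply hW
    have h2 : Matrix.toEuclideanLin Wᵀ = 0 := by
      apply LinearMap.ext
      intro x
      have hx := ContinuousLinearMap.ext_iff.mp h x
      simpa [hT] using hx
    have h3 : Wᵀ = 0 := by
      simpa using (LinearEquiv.map_eq_zero_iff Matrix.toEuclideanLin).mp h2
    simpa using congrArg Matrix.transpose h3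
  set S : Fin n → Fin n → ℝ := fun u v => ∑ k, (Z u k - Z v k) ^ 2 with hS
  have hSnn : ∀ u v, 0 ≤ S u v := fun u v => Finset.sum_nonneg fun k _ => sq_nonneg _
  have hsqnorm : ∀ {m : ℕ} (w : EuclideanSpace ℝ (Fin m)), ‖w‖ ^ 2 = ∑ i, (w i) ^ 2 := by
    intro m w
    rw [EuclideanSpace.norm_eq, Real.sq_sqrt (by positivity)]
    simp [Real.norm_eq_abs, sq_abs]
  -- edge bound
  have hedge : ∀ u v, y u ≠ y v → 2 ≤ N ^ 2 * S u v := by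
    intro u v hyuv
    set x : EuclideanSpace ℝ (Fin d) := (WithLp.equiv 2 _).symm (fun k => Z u k - Z v k) with hx
    have hTx : ∀ j, T x j = Y u j - Y v j := by
      intro j
      have h1 : T x j = ∑ k, W k j * (Z u k - Z v k) := by
        simp [hT, hx, Matrix.toEuclideanLin_apply, Matrix.mulVec, dotProduct,
          Matrix.transpose_apply]
      rw [h1, hsep]
      simp only [Matrix.mul_apply]
      rw [← Finset.sum_sub_distrib]
      exact Finset.sum_congr rfl fun k _ => by ring
    have hTxnorm : ‖T x‖ ^ 2 = 2 := by
      rw [hsqnorm (T x)]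
      have : ∀ j, (T x j) ^ 2 = (if j = y u then (1:ℝ) else 0) + (if j = y v then (1:ℝ) else 0) := by
        intro j
        rw [hTx j, hY, hY]
        by_cases h1 : j = y u <;> by_cases h2 : j = y v <;>
          simp_all <;> ring_nf
      simp only [this, Finset.sum_add_distrib, Finset.sum_ite_eq', Finset.mem_univ, if_true]
      norm_num
    have hxnorm : ‖x‖ ^ 2 = S u v := by
      rw [hsqnorm x]
      rfl
    have hle : ‖T x‖ ≤ N * ‖x‖ := T.le_opNorm x
    have := pow_le_pow_left₀ (norm_nonneg (T x)) hle 2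
    rw [hTxnorm, mul_pow, hxnorm] at this
    exact this
  -- trace identity
  subst hL
  have htr : (Zᵀ * (Matrix.diagonal (fun u => ∑ v, A u v) - A) * Z).trace
      = (1/2) * ∑ u, ∑ v, A u v * S u v := by
    have h1 : (Zᵀ * (Matrix.diagonal (fun u => ∑ v, A u v) - A) * Z).trace
        = ∑ k, ∑ u, ∑ v, Z u k * ((Matrix.diagonal (fun w => ∑ v, A w v) - A) u v) * Z v k := by
      rw [Matrix.trace]
      simp only [Matrix.diag_apply, Matrix.mul_apply, Matrix.transpose_apply, Finset.sum_mul]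
      exact Finset.sum_congr rfl fun k _ => Finset.sum_comm
    rw [h1]
    have quad : ∀ x : Fin n → ℝ,
        ∑ u, ∑ v, x u * ((Matrix.diagonal (fun w => ∑ v, A w v) - A) u v) * x v
          = (1/2) * ∑ u, ∑ v, A u v * (x u - x v) ^ 2 := by
      intro x
      have hswap : ∑ u, ∑ v, A u v * x v ^ 2 = ∑ u, ∑ v, A u v * x u ^ 2 := by
        rw [Finset.sum_comm]
        exact Finset.sum_congr rfl fun u _ => Finset.sum_congr rfl fun v _ => by
          rw [hsym.apply]
      have hrhs : ∑ u, ∑ v, A u v * (x u - x v) ^ 2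
          = ∑ u, ∑ v, (A u v * x u ^ 2 + A u v * x v ^ 2
              - A u v * (x u * x v) - A u v * (x u * x v)) :=
        Finset.sum_congr rfl fun u _ => Finset.sum_congr rfl fun v _ => by ring
      have hlhs : ∀ u, ∑ v, x u * ((Matrix.diagonal (fun w => ∑ v, A w v) - A) u v) * x v
          = (∑ v, A u v * x u ^ 2) - ∑ v, A u v * (x u * x v) := by
        intro u
        have hterm : ∀ v, x u * ((Matrix.diagonal (fun w => ∑ v2, A w v2) - A) u v) * x v
            = (if u = v then (∑ w, A u w) * x u ^ 2 else 0) - A u v * (x u * x v) := by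
          intro v
          simp only [Matrix.sub_apply, Matrix.diagonal_apply]
          split_ifs with h
          · rw [← h]; ring
          · ring
        rw [Finset.sum_congr rfl fun v _ => hterm v, Finset.sum_sub_distrib]
        simp only [Finset.sum_ite_eq, Finset.mem_univ, if_true, Finset.sum_mul]
      simp only [hlhs, hrhs, Finset.sum_sub_distrib, Finset.sum_add_distrib]
      rw [hswap]
      ring
    rw [Finset.sum_congr rfl fun k _ => quad (fun u => Z u k)]
    rw [← Finset.mul_sum, Finset.sum_comm]
    congr 1
    refine Finset.sum_congr rfl fun u _ => ?_
    rw [Finset.sum_comm]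
    refine Finset.sum_congr rfl fun v _ => ?_
    rw [hS, Finset.mul_sum]
  rw [htr]
  -- restrict to dissimilar edges
  set Ed := E.filter fun p => ¬ y p.1 = y p.2 with hEd
  have hEdsub : Ed ⊆ Finset.univ ×ˢ Finset.univ := fun p _ =>
    Finset.mem_product.mpr ⟨Finset.mem_univ _, Finset.mem_univ _⟩
  have hsum1 : ∑ p ∈ Ed, A p.1 p.2 * S p.1 p.2 ≤ ∑ u, ∑ v, A u v * S u v := by
    rw [← Finset.sum_product']
    exact Finset.sum_le_sum_of_subset_of_nonneg hEdsub fun p _ _ =>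
      mul_nonneg (hnonneg _ _) (hSnn _ _)
  have hαm_pos : 0 < αm := by
    obtain ⟨p, hp, hpe⟩ := Finset.exists_mem_eq_inf' hEne fun p => A p.1 p.2
    rw [hαm, hpe]
    have := hE ▸ hp
    simp only [Finset.mem_filter] at this
    exact this.2.2
  have hterm : ∀ p ∈ Ed, αm * (2 / N ^ 2) ≤ A p.1 p.2 * S p.1 p.2 := by
    intro p hp
    rw [hEd, Finset.mem_filter] at hp
    have hAp : αm ≤ A p.1 p.2 := hαm ▸ Finset.inf'_le _ hp.1
    have hSp : 2 / N ^ 2 ≤ S p.1 p.2 := by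
      rw [div_le_iff₀ (by positivity)]
      rw [mul_comm]
      exact hedge p.1 p.2 hp.2
    exact mul_le_mul hAp hSp (by positivity) (le_trans hαm_pos.le hAp)
  have hsum2 : (Ed.card : ℝ) * (αm * (2 / N ^ 2)) ≤ ∑ p ∈ Ed, A p.1 p.2 * S p.1 p.2 := by
    have := Finset.card_nsmul_le_sum Ed (fun p => A p.1 p.2 * S p.1 p.2) (αm * (2 / N ^ 2)) hterm
    simp only [nsmul_eq_mul] at this
    exact this
  -- cardinality arithmetic
  have hEcard : (0 : ℝ) < E.card := by
    exact_mod_cast Finset.card_pos.mpr hEne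
  have hcards : ((E.filter fun p => y p.1 = y p.2).card : ℝ) + Ed.card = E.card := by
    rw [hEd]
    exact_mod_cast Finset.card_filter_add_card_filter_not (s := E)
      (p := fun p => y p.1 = y p.2)
  have h1H : 1 - H = (Ed.card : ℝ) / E.card := by
    rw [hH, eq_div_iff hEcard.ne', sub_mul, one_mul, div_mul_cancel₀ _ hEcard.ne']
    linarith [hcards]
  rw [h1H]
  have hfinal : αm * (E.card : ℝ) / (2 * N ^ 2) * ((Ed.card : ℝ) / E.card)
      = αm * Ed.card / (2 * N ^ 2) := by
    rw [div_mul_div_comm, mul_comm (2 * N ^ 2) ((E.card : ℝ)),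
      show αm * (E.card : ℝ) * Ed.card = (E.card : ℝ) * (αm * Ed.card) by ring,
      mul_div_mul_left _ _ hEcard.ne']
  rw [hfinal]
  have hX : 0 ≤ αm * (Ed.card : ℝ) * (N ^ 2)⁻¹ :=
    mul_nonneg (mul_nonneg hαm_pos.le (Nat.cast_nonneg _)) (inv_nonneg.mpr (sq_nonneg N))
  have e1 : αm * (Ed.card : ℝ) / (2 * N ^ 2)
      ≤ (1/2) * ((Ed.card : ℝ) * (αm * (2 / N ^ 2))) := by
    rw [div_eq_mul_inv, mul_inv, div_eq_mul_inv]
    ring_nf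
    ring_nf at hX
    linarith [hX]
  refine e1.trans ?_
  have e2 : (1/2 : ℝ) * ((Ed.card : ℝ) * (αm * (2 / N ^ 2)))
      ≤ (1/2) * ∑ p ∈ Ed, A p.1 p.2 * S p.1 p.2 := by linarith [hsum2]
  refine e2.trans ?_
  linarith [hsum1]
end

section
/- Let E and C be disjoint nonempty finite sets of edges on a labeled vertex set, and for 0 ≤ k ≤ |C| let Eh(k) denote the expectation over a uniformly random k-subset S of C of the edge homophily H(E ∪ S) (note |E ∪ S| = |E| + k since E and C are disjoint). Then: (i) if H(C) > H(E), then Eh(k+1) > Eh(k) for every k with k + 1 ≤ |C|, and Eh(k) > H(E) for every k with 1 ≤ k ≤ |C|; (ii) if H(C) ≤ H(E), then Eh(k+1) ≤ Eh(k) for every k with k + 1 ≤ |C|, and Eh(k) ≤ H(E) for every k with 0 ≤ k ≤ |C|. (In the paper, C = E_r \ E is the set of edges of a reference graph G_r absent from the original graph G, so H(C) = H(G_r \ G); this is Proposition 1 on homophily-enhancing edge addition.) -/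
/-- An edge (unordered pair) is *homophilic* if its two endpoints have the
same label. -/
def homophilicEdge {V L : Type*} (ℓ : V → L) : Sym2 V → Prop :=
  Sym2.lift ⟨fun u v => ℓ u = ℓ v, fun _ _ => propext eq_comm⟩

open scoped Classical in
/-- The edge homophily of a finite set of edges: the number of homophilic
edges divided by the total number of edges, as a real number. -/
noncomputable def edgeHomophily {V L : Type*} (ℓ : V → L)
    (F : Finset (Sym2 V)) : ℝ :=
  ((F.filter fun e => homophilicEdge ℓ e).card : ℝ) / F.card

open scoped Classical in
/-- The expectation, over a uniformly random `k`-subset `S` of `C`, of the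
edge homophily of `E ∪ S`. -/
noncomputable def expAddHomophily {V L : Type*} (ℓ : V → L)
    (E C : Finset (Sym2 V)) (k : ℕ) : ℝ :=
  (∑ S ∈ C.powersetCard k, edgeHomophily ℓ (E ∪ S)) / (C.card.choose k)

open Finset

theorem count_subsets_containing {α : Type*} [DecidableEq α] (C : Finset α) (e : α) (he : e ∈ C) (k : ℕ) :
    ((C.powersetCard (k+1)).filter (fun S => e ∈ S)).card
      = (C.card - 1).choose k := by
  rw [← card_erase_of_mem he, ← card_powersetCard k (C.erase e)]
  refine card_bij' (fun S _ => S.erase e) (fun T _ => insert e T) ?hi ?hj ?li ?ri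
  case hi =>
    intro S hS
    simp only [mem_filter, mem_powersetCard] at hS
    simp only [mem_powersetCard]
    exact ⟨fun x hx => mem_erase.2 ⟨(mem_erase.1 hx).1, hS.1.1 (mem_erase.1 hx).2⟩,
      by rw [card_erase_of_mem hS.2, hS.1.2]; rfl⟩
  case hj =>
    intro T hT
    simp only [mem_powersetCard] at hT
    have heT : e ∉ T := fun h => (mem_erase.1 (hT.1 h)).1 rfl
    simp only [mem_filter, mem_powersetCard]
    exact ⟨⟨insert_subset he (hT.1.trans (erase_subset _ _)), by rw [card_insert_of_notMem heT, hT.2]⟩, mem_insert_self _ _⟩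
  case li =>
    intro S hS
    simp only [mem_filter] at hS
    exact insert_erase hS.2
  case ri =>
    intro T hT
    simp only [mem_powersetCard] at hT
    exact erase_insert (fun h => (mem_erase.1 (hT.1 h)).1 rfl)

open scoped Classical in
theorem sum_filter_card_powersetCard {α : Type*} [DecidableEq α] (C : Finset α)
    (p : α → Prop) (k : ℕ) :
    ∑ S ∈ C.powersetCard (k+1), (S.filter p).card
      = (C.filter p).card * (C.card - 1).choose k := by
  calc ∑ S ∈ C.powersetCard (k+1), (S.filter p).card
      = ∑ S ∈ C.powersetCard (k+1), ∑ e ∈ C.filter p, (if e ∈ S then 1 else 0) := by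
        refine sum_congr rfl fun S hS => ?_
        have hSC : S ⊆ C := (mem_powersetCard.1 hS).1
        rw [← card_filter]
        congr 1
        ext x
        simp only [mem_filter]
        exact ⟨fun h => ⟨⟨hSC h.1, h.2⟩, h.1⟩, fun h => ⟨h.2, h.1.2⟩⟩
    _ = ∑ e ∈ C.filter p, ∑ S ∈ C.powersetCard (k+1), (if e ∈ S then 1 else 0) :=
        sum_comm
    _ = ∑ e ∈ C.filter p, (C.card - 1).choose k := by
        refine sum_congr rfl fun e he => ?_
        rw [← card_filter]
        exact count_subsets_containing C e (mem_filter.1 he).1 k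
    _ = (C.filter p).card * (C.card - 1).choose k := by
        rw [sum_const, smul_eq_mul]

open scoped Classical in
theorem expAdd_formula {V L : Type*} (ℓ : V → L)
    (E C : Finset (Sym2 V)) (hdisj : Disjoint E C) (hC : 0 < C.card)
    {k : ℕ} (hk : k ≤ C.card) :
    expAddHomophily ℓ E C k
      = (((E.filter fun e => homophilicEdge ℓ e).card : ℝ)
          + k * (((C.filter fun e => homophilicEdge ℓ e).card : ℝ) / C.card))
        / (E.card + k) := by
  set a : ℝ := ((E.filter fun e => homophilicEdge ℓ e).card : ℝ)
  set b : ℝ := ((C.filter fun e => homophilicEdge ℓ e).card : ℝ)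
  set m : ℝ := (E.card : ℝ)
  set n := C.card
  rcases k with _ | j
  · simp [expAddHomophily, powersetCard_zero, edgeHomophily, a, m]
  · have hn1 : (n:ℝ) ≠ 0 := Nat.cast_ne_zero.2 hC.ne'
    have hCk : 0 < n.choose (j+1) := Nat.choose_pos hk
    have hCk' : ((n.choose (j+1) : ℕ) : ℝ) ≠ 0 := Nat.cast_ne_zero.2 hCk.ne'
    have hD : (m + (j+1:ℕ) : ℝ) ≠ 0 := by
      have : (0:ℝ) ≤ m := Nat.cast_nonneg _
      push_cast
      positivity
    have hchoose : (n:ℝ) * ((n-1).choose j : ℕ) = ((j:ℝ)+1) * (n.choose (j+1) : ℕ) := by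
      have h1 : n - 1 + 1 = n := Nat.succ_pred_eq_of_pos hC
      have := Nat.add_one_mul_choose_eq (n-1) j
      rw [h1] at this
      have : (n : ℝ) * ((n-1).choose j : ℕ) = ((n.choose (j+1) : ℕ) : ℝ) * ((j:ℝ)+1) := by
        exact_mod_cast congrArg (Nat.cast : ℕ → ℝ) this
      linarith [this]
    have hstep : ∀ S ∈ C.powersetCard (j+1),
        edgeHomophily ℓ (E ∪ S)
          = (a + ((S.filter fun e => homophilicEdge ℓ e).card : ℝ)) / (m + (j+1:ℕ)) := by
      intro S hS
      rw [mem_powersetCard] at hS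
      have hd : Disjoint E S := hdisj.mono_right hS.1
      have hcard : (E ∪ S).card = E.card + (j+1) := by
        rw [card_union_of_disjoint hd, hS.2]
      have hfilt : ((E ∪ S).filter fun e => homophilicEdge ℓ e)
          = (E.filter fun e => homophilicEdge ℓ e) ∪ (S.filter fun e => homophilicEdge ℓ e) :=
        filter_union _ _ _
      have hdf : Disjoint (E.filter fun e => homophilicEdge ℓ e)
          (S.filter fun e => homophilicEdge ℓ e) :=
        disjoint_filter_filter hd
      rw [edgeHomophily, hfilt, card_union_of_disjoint hdf, hcard]
      push_cast
      simp only [a, m]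
    rw [expAddHomophily, sum_congr rfl hstep, ← sum_div, sum_add_distrib, sum_const,
        card_powersetCard]
    have hsum : ∑ S ∈ C.powersetCard (j+1), ((S.filter fun e => homophilicEdge ℓ e).card : ℝ)
        = b * ((n-1).choose j : ℕ) := by
      have := sum_filter_card_powersetCard C (fun e => homophilicEdge ℓ e) j
      have h2 : ((∑ S ∈ C.powersetCard (j+1), (S.filter fun e => homophilicEdge ℓ e).card : ℕ) : ℝ)
          = b * ((n-1).choose j : ℕ) := by rw [this]; push_cast; ring
      rw [← h2, Nat.cast_sum]
    rw [hsum, nsmul_eq_mul]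
    push_cast
    have hD' : m + (j:ℝ) + 1 ≠ 0 := by push_cast at hD; rwa [add_assoc]
    rw [show C.card = n from rfl]
    field_simp
    congr 1
    linear_combination b * hchoose

/-- **Proposition 1 (homophily-enhancing edge addition).** Let `E` and `C` be
disjoint nonempty finite sets of edges (unordered pairs of distinct vertices)
on a labeled vertex set, and for `k ≤ |C|` let `Eh(k)` be the expectation over
a uniformly random `k`-subset `S` of `C` of the edge homophily `H(E ∪ S)`.
(i) If `H(C) > H(E)` then `Eh(k+1) > Eh(k)` for all `k` with `k + 1 ≤ |C|`,
and `Eh(k) > H(E)` for all `1 ≤ k ≤ |C|`.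
(ii) If `H(C) ≤ H(E)` then `Eh(k+1) ≤ Eh(k)` for all `k` with `k + 1 ≤ |C|`,
and `Eh(k) ≤ H(E)` for all `k ≤ |C|`. -/
theorem expected_homophily_edge_addition
    {V L : Type*} [Fintype V] [DecidableEq V] (ℓ : V → L)
    (E C : Finset (Sym2 V)) (hdisj : Disjoint E C)
    (hEne : E.Nonempty) (hCne : C.Nonempty)
    (hEnd : ∀ e ∈ E, ¬ e.IsDiag) (hCnd : ∀ e ∈ C, ¬ e.IsDiag) :
    (edgeHomophily ℓ C > edgeHomophily ℓ E →
      (∀ k : ℕ, k + 1 ≤ C.card →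
        expAddHomophily ℓ E C k < expAddHomophily ℓ E C (k + 1)) ∧
      (∀ k : ℕ, 1 ≤ k → k ≤ C.card →
        edgeHomophily ℓ E < expAddHomophily ℓ E C k)) ∧
    (edgeHomophily ℓ C ≤ edgeHomophily ℓ E →
      (∀ k : ℕ, k + 1 ≤ C.card →
        expAddHomophily ℓ E C (k + 1) ≤ expAddHomophily ℓ E C k) ∧
      (∀ k : ℕ, k ≤ C.card →
        expAddHomophily ℓ E C k ≤ edgeHomophily ℓ E)) := by
  classical
  have hm : (0:ℝ) < (E.card : ℝ) := by exact_mod_cast card_pos.2 hEne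
  have hn : (0:ℝ) < (C.card : ℝ) := by exact_mod_cast card_pos.2 hCne
  set a : ℝ := ((E.filter fun e => homophilicEdge ℓ e).card : ℝ) with ha
  set b : ℝ := ((C.filter fun e => homophilicEdge ℓ e).card : ℝ) with hb
  set m : ℝ := (E.card : ℝ) with hmdef
  set n : ℝ := (C.card : ℝ) with hndef
  have hE : edgeHomophily ℓ E = a / m := rfl
  have hHC : edgeHomophily ℓ C = b / n := rfl
  set q : ℝ := b / n with hq
  have hform : ∀ k : ℕ, k ≤ C.card →
      expAddHomophily ℓ E C k = (a + k * q) / (m + k) := by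
    intro k hk
    exact expAdd_formula ℓ E C hdisj (card_pos.2 hCne) hk
  constructor
  · intro h
    rw [hHC, hE] at h
    have hqa : a < q * m := (div_lt_iff₀ hm).1 h
    constructor
    · intro k hk1
      rw [hform k (Nat.le_of_succ_le hk1), hform (k+1) hk1,
        div_lt_div_iff₀ (by positivity) (by positivity)]
      push_cast
      nlinarith [hqa, Nat.cast_nonneg (α := ℝ) k]
    · intro k hk1 hk2
      rw [hE, hform k hk2, div_lt_div_iff₀ hm (by positivity)]
      have hk1' : (1:ℝ) ≤ (k:ℝ) := by exact_mod_cast hk1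
      nlinarith [hqa, hk1']
  · intro h
    rw [hHC, hE] at h
    have hqa : q * m ≤ a := (le_div_iff₀ hm).1 h
    constructor
    · intro k hk1
      rw [hform k (Nat.le_of_succ_le hk1), hform (k+1) hk1,
        div_le_div_iff₀ (by positivity) (by positivity)]
      push_cast
      nlinarith [hqa, Nat.cast_nonneg (α := ℝ) k]
    · intro k hk2
      rw [hE, hform k hk2, div_le_div_iff₀ (by positivity) hm]
      have hk0 : (0:ℝ) ≤ (k:ℝ) := Nat.cast_nonneg k
      nlinarith [hqa, hk0]
end

section
/- Let E and C be disjoint finite sets of edges on a labeled vertex set with C nonempty, let n and m be the numbers of homophilic and heterophilic edges in E, and let n' and m' be the numbers of homophilic and heterophilic edges in C (so n' + m' = |C|). Then for every natural number k with 0 ≤ k ≤ |C| and n + m + k > 0, the expectation over a uniformly random k-subset S of C of the edge homophily H(E ∪ S) equals (n + k · n'/(n' + m')) / (n + m + k), as real numbers. -/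
open scoped Classical in
/-- The number of homophilic edges in `F`. -/
noncomputable def homoCount {V L : Type*} (ℓ : V → L)
    (F : Finset (Sym2 V)) : ℕ :=
  (F.filter fun e => homophilicEdge ℓ e).card

open scoped Classical in
/-- The number of heterophilic edges in `F`. -/
noncomputable def heteroCount {V L : Type*} (ℓ : V → L)
    (F : Finset (Sym2 V)) : ℕ :=
  (F.filter fun e => ¬ homophilicEdge ℓ e).card

open Finset in
open scoped Classical in
lemma count_containing {α : Type*} [DecidableEq α] (C : Finset α) (a : α) (ha : a ∈ C) (k : ℕ) :
    ((C.powersetCard (k+1)).filter (fun S => a ∈ S)).card = (C.card - 1).choose k := by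
  rw [← card_erase_of_mem ha, ← card_powersetCard]
  apply Finset.card_bij (fun S _ => S.erase a)
  · intro S hS
    simp only [mem_filter, mem_powersetCard] at hS
    simp only [mem_powersetCard]
    exact ⟨erase_subset_erase a hS.1.1, by rw [card_erase_of_mem hS.2, hS.1.2]; rfl⟩
  · intro S hS S' hS' h
    simp only [mem_filter] at hS hS'
    rw [← insert_erase hS.2, ← insert_erase hS'.2, h]
  · intro T hT
    simp only [mem_powersetCard] at hT
    refine ⟨insert a T, ?_, ?_⟩
    · simp only [mem_filter, mem_powersetCard]
      have haT : a ∉ T := fun h => (mem_erase.mp (hT.1 h)).1 rfl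
      exact ⟨⟨insert_subset ha (hT.1.trans (erase_subset a C)), by
        rw [card_insert_of_notMem haT, hT.2]⟩, mem_insert_self a T⟩
    · have haT : a ∉ T := fun h => (mem_erase.mp (hT.1 h)).1 rfl
      rw [erase_insert haT]

open Finset in
open scoped Classical in
lemma sum_homoCount {V L : Type*} (ℓ : V → L) [DecidableEq (Sym2 V)]
    (C : Finset (Sym2 V)) (j : ℕ) :
    ∑ S ∈ C.powersetCard (j+1), homoCount ℓ S
      = homoCount ℓ C * (C.card - 1).choose j := by
  have h1 : ∀ S ∈ C.powersetCard (j+1), homoCount ℓ S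
      = ∑ e ∈ C.filter (fun e => homophilicEdge ℓ e), if e ∈ S then 1 else 0 := by
    intro S hS
    obtain ⟨hSC, -⟩ := Finset.mem_powersetCard.mp hS
    rw [Finset.sum_ite_mem, Finset.sum_const, smul_eq_mul, mul_one, homoCount]
    congr 1
    ext e
    simp only [Finset.mem_filter, Finset.mem_inter]
    constructor
    · exact fun h => ⟨⟨hSC h.1, h.2⟩, h.1⟩
    · exact fun h => ⟨h.2, h.1.2⟩
  rw [Finset.sum_congr rfl h1, Finset.sum_comm]
  rw [homoCount, Finset.card_eq_sum_ones (Finset.filter _ C), Finset.sum_mul, one_mul]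
  refine Finset.sum_congr rfl fun e he => ?_
  have heC : e ∈ C := (Finset.mem_filter.mp he).1
  rw [← count_containing C e heC j, Finset.card_filter]

open scoped Classical in
lemma edgeHomophily_union {V L : Type*} (ℓ : V → L) (E S : Finset (Sym2 V))
    (hdES : Disjoint E S) :
    edgeHomophily ℓ (E ∪ S)
      = ((homoCount ℓ E : ℝ) + (homoCount ℓ S : ℝ)) / ((E.card : ℝ) + S.card) := by
  rw [edgeHomophily, Finset.filter_union,
    Finset.card_union_of_disjoint (Finset.disjoint_filter_filter hdES),
    Finset.card_union_of_disjoint hdES, homoCount, homoCount]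
  push_cast
  ring_nf

/-- Let `E` and `C` be disjoint finite sets of edges (unordered pairs of
distinct vertices) with `C` nonempty, let `n, m` be the numbers of homophilic
and heterophilic edges of `E`, and `n', m'` those of `C` (so `n' + m' = |C|`).
Then for every `k ≤ |C|` with `n + m + k > 0`, the expectation over a
uniformly random `k`-subset `S` of `C` of the edge homophily `H(E ∪ S)` is
`(n + k · n'/(n' + m')) / (n + m + k)`. -/
theorem expected_homophily_edge_addition_formula
    {V L : Type*} [Fintype V] [DecidableEq V] (ℓ : V → L)
    (E C : Finset (Sym2 V)) (hdisj : Disjoint E C) (hCne : C.Nonempty)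
    (hEnd : ∀ e ∈ E, ¬ e.IsDiag) (hCnd : ∀ e ∈ C, ¬ e.IsDiag)
    (n m n' m' : ℕ)
    (hn : n = homoCount ℓ E) (hm : m = heteroCount ℓ E)
    (hn' : n' = homoCount ℓ C) (hm' : m' = heteroCount ℓ C)
    (k : ℕ) (hk : k ≤ C.card) (hpos : 0 < n + m + k) :
    expAddHomophily ℓ E C k =
      ((n : ℝ) + k * n' / ((n' : ℝ) + m')) / ((n : ℝ) + m + k) := by
  classical
  have hE : E.card = n + m := by
    rw [hn, hm, homoCount, heteroCount]
    exact (Finset.card_filter_add_card_filter_not _).symm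
  have hC : C.card = n' + m' := by
    rw [hn', hm', homoCount, heteroCount]
    exact (Finset.card_filter_add_card_filter_not _).symm
  have hDne : ((n : ℝ) + m + k) ≠ 0 := by
    have : (0:ℝ) < n + m + k := by exact_mod_cast hpos
    linarith
  have hsum0 := Finset.sum_congr (s₁ := C.powersetCard k) rfl
    (fun S hS => edgeHomophily_union ℓ E S
      (hdisj.mono_right (Finset.mem_powersetCard.mp hS).1))
  have hsum1 : ∑ S ∈ C.powersetCard k,
        (((homoCount ℓ E : ℝ) + (homoCount ℓ S : ℝ)) / ((E.card : ℝ) + S.card))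
      = ∑ S ∈ C.powersetCard k, (((n : ℝ) + (homoCount ℓ S : ℝ)) / ((n : ℝ) + m + k)) := by
    refine Finset.sum_congr rfl fun S hS => ?_
    rw [(Finset.mem_powersetCard.mp hS).2, hE, ← hn]
    push_cast
    ring_nf
  rw [expAddHomophily, hsum0, hsum1, ← Finset.sum_div,
    Finset.sum_add_distrib, Finset.sum_const, Finset.card_powersetCard, nsmul_eq_mul]
  rcases k with - | j
  · simp only [Nat.choose_zero_right, Nat.cast_one, Finset.powersetCard_zero,
      Finset.sum_singleton, Nat.cast_zero, add_zero, zero_mul, zero_div, div_one, homoCount,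
      Finset.filter_empty, Finset.card_empty]
    ring
  · have hc : 0 < C.card := Finset.card_pos.mpr hCne
    have hsum : ∑ S ∈ C.powersetCard (j+1), (homoCount ℓ S : ℝ)
        = (n' : ℝ) * (C.card - 1).choose j := by
      rw [← Nat.cast_sum, sum_homoCount, hn']
      push_cast
      ring
    have hid : (C.card : ℝ) * ((C.card - 1).choose j : ℝ)
        = (C.card.choose (j+1) : ℝ) * (j+1) := by
      have h0 := Nat.add_one_mul_choose_eq (C.card - 1) j
      have h1 : C.card - 1 + 1 = C.card := by omega
      rw [h1] at h0
      exact_mod_cast congrArg (Nat.cast : ℕ → ℝ) h0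
    have hch : (0 : ℝ) < C.card.choose (j+1) := by
      exact_mod_cast Nat.choose_pos hk
    have hc' : ((n' : ℝ) + m') ≠ 0 := by
      have : (0:ℝ) < C.card := by exact_mod_cast hc
      rw [hC] at this; push_cast at this; linarith
    rw [hsum]
    have hcc : (C.card : ℝ) = (n' : ℝ) + m' := by rw [hC]; push_cast; ring
    push_cast at hid ⊢
    field_simp
    linear_combination ((n' : ℝ)) * hid
      - (((n' : ℝ)) * (((C.card - 1).choose j : ℕ) : ℝ)) * hcc
end

section
/- Let E_r and E be finite sets of edges on a labeled vertex set such that E is nonempty and E_r \ E is nonempty. If H(E_r) > H(E) + |E_r ∩ E| / |E_r|, then H(E_r \ E) > H(E). (This gives a checkable sufficient condition, in terms of the reference graph's homophily alone, for the hypothesis H(G_r \ G) > H(G) of the edge-addition proposition to hold, as asserted in Corollary 1.) -/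
/-- **Corollary 1 (sufficient condition).** For finite sets of edges
(unordered pairs of distinct vertices) `E_r` and `E` with `E` nonempty and
`E_r \ E` nonempty: if `H(E_r) > H(E) + |E_r ∩ E| / |E_r|` then
`H(E_r \ E) > H(E)`. -/
theorem homophily_sdiff_gt_of_homophily_gt
    {V L : Type*} [Fintype V] [DecidableEq V] (ℓ : V → L)
    (Er E : Finset (Sym2 V)) (hEne : E.Nonempty) (hne : (Er \ E).Nonempty)
    (hErd : ∀ e ∈ Er, ¬ e.IsDiag) (hEd : ∀ e ∈ E, ¬ e.IsDiag)
    (h : edgeHomophily ℓ Er >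
      edgeHomophily ℓ E + ((Er ∩ E).card : ℝ) / Er.card) :
    edgeHomophily ℓ (Er \ E) > edgeHomophily ℓ E := by
  classical
  have hsub : (Er \ E) ⊆ Er := Finset.sdiff_subset
  have hErne : Er.Nonempty := hne.mono hsub
  have hEr0 : (0:ℝ) < Er.card := by exact_mod_cast Finset.card_pos.mpr hErne
  have hsd0 : (0:ℝ) < (Er \ E).card := by exact_mod_cast Finset.card_pos.mpr hne
  set p := fun e : Sym2 V => homophilicEdge ℓ e with hp
  have hsplit : (Er.filter p).card
      = ((Er \ E).filter p).card + ((Er ∩ E).filter p).card := by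
    rw [← Finset.card_union_of_disjoint, ← Finset.filter_union,
      Finset.sdiff_union_inter]
    exact Disjoint.mono (Finset.filter_subset _ _) (Finset.filter_subset _ _)
      (Finset.sdiff_disjoint.mono_right Finset.inter_subset_right)
  have hle : ((Er.filter p).card : ℝ)
      ≤ ((Er \ E).filter p).card + (Er ∩ E).card := by
    rw [hsplit]
    push_cast
    have := Finset.card_filter_le (Er ∩ E) p
    exact_mod_cast Nat.add_le_add_left this _
  have key : edgeHomophily ℓ E < (((Er \ E).filter p).card : ℝ) / Er.card := by
    have h1 : edgeHomophily ℓ E + ((Er ∩ E).card : ℝ) / Er.card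
        < ((Er.filter p).card : ℝ) / Er.card := h
    have h2 : ((Er.filter p).card : ℝ) / Er.card
        ≤ (((Er \ E).filter p).card + ((Er ∩ E).card : ℝ)) / Er.card :=
      div_le_div_of_nonneg_right hle hEr0.le |>.trans_eq rfl
    have := h1.trans_le h2
    rw [add_div] at this
    linarith
  have mono : (((Er \ E).filter p).card : ℝ) / Er.card
      ≤ (((Er \ E).filter p).card : ℝ) / (Er \ E).card := by
    apply div_le_div_of_nonneg_left _ hsd0
    · exact_mod_cast Finset.card_le_card hsub
    · positivity
  calc edgeHomophily ℓ E < (((Er \ E).filter p).card : ℝ) / Er.card := key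
    _ ≤ (((Er \ E).filter p).card : ℝ) / (Er \ E).card := mono
    _ = edgeHomophily ℓ (Er \ E) := by rw [edgeHomophily]
end
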